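/- For every k ≥ 0, if H_0,…,H_{k-1} are nowhere zero then the operator identity L_k∘B_{k-1} = B̄_k∘L holds on 𝔊. -/
import Mathlib


/-!
Discrete (quad-graph) setting: the space `𝔊` is modelled by `QG = ℤ → ℤ → ℝ`
(functions `φ(i,j)`), with the shifts `Ti`, `Tj`, their inverses, and the
`k`-fold shifts `TiZ k`, `TjZ k`.  For `g : QG`, pointwise multiplication
`g * φ` models the operator `g·`.
-/

/-- The function space `𝔊` of functions `ℤ² → ℝ`. -/
abbrev QG : Type := ℤ → ℤ → ℝ

namespace QG

noncomputable section

/-- The shift operator `T_i(φ)(i,j) = φ(i+1,j)`. -/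
def Ti (φ : QG) : QG := fun i j => φ (i + 1) j

/-- The shift operator `T_j(φ)(i,j) = φ(i,j+1)`. -/
def Tj (φ : QG) : QG := fun i j => φ i (j + 1)

/-- The `k`-fold shift in `i`. -/
def TiZ (k : ℤ) (φ : QG) : QG := fun i j => φ (i + k) j

/-- The `k`-fold shift in `j`. -/
def TjZ (k : ℤ) (φ : QG) : QG := fun i j => φ i (j + k)

/-- The inverse shift `T_i⁻¹`. -/
def TiInv (φ : QG) : QG := fun i j => φ (i - 1) j

/-- The inverse shift `T_j⁻¹`. -/
def TjInv (φ : QG) : QG := fun i j => φ i (j - 1)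

/-- A function that is nowhere zero. -/
def NowhereZero (φ : QG) : Prop := ∀ i j, φ i j ≠ 0

/-- The linearization operator `L = T_i∘T_j − a·T_i − b·T_j − c·`. -/
def L (a b c : QG) (φ : QG) : QG := Ti (Tj φ) - a * Ti φ - b * Tj φ - c * φ

/-- The pair `(b_k, H_k)` of the Laplace j-transformations:
`b_0 = a`, `H_0 = c + b·T_i⁻¹(a)`,
`b_{k+1} = T_i⁻¹(b_k)·T_j(H_k)/H_k`,
`H_{k+1} = T_j(H_k) − T_j^k(b)·b_{k+1} + T_j^{k+1}(b)·T_i⁻¹(b_{k+1})`. -/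
def bH (a b c : QG) : ℕ → QG × QG
  | 0 => (a, c + b * TiInv a)
  | k + 1 =>
      let bk := TiInv (bH a b c k).1 * Tj (bH a b c k).2 / (bH a b c k).2
      (bk, Tj (bH a b c k).2 - TjZ (k : ℤ) b * bk + TjZ ((k : ℤ) + 1) b * TiInv bk)

/-- The function `b_k`. -/
def bj (a b c : QG) (k : ℕ) : QG := (bH a b c k).1

/-- The Laplace j-invariant `H_k`. -/
def Hj (a b c : QG) (k : ℕ) : QG := (bH a b c k).2

/-- The operator `L_k`: `L_0 = L` and
`L_k = (T_i − T_j^k(b)·)∘(T_j − T_i⁻¹(b_k)·) − H_k·` for `k ≥ 1`. -/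
def Lk (a b c : QG) : ℕ → QG → QG
  | 0, φ => L a b c φ
  | k + 1, φ =>
      Ti (Tj φ - TiInv (bj a b c (k + 1)) * φ)
        - TjZ ((k : ℤ) + 1) b * (Tj φ - TiInv (bj a b c (k + 1)) * φ)
        - Hj a b c (k + 1) * φ

/-- `Bo (k+1)` is the operator `B_k = (T_j − T_i⁻¹(b_k)·)∘B_{k-1}`; `Bo 0 = id` is `B_{-1}`. -/
def Bo (a b c : QG) : ℕ → QG → QG
  | 0, φ => φ
  | k + 1, φ => Tj (Bo a b c k φ) - TiInv (bj a b c k) * Bo a b c k φ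

/-- `Bbar k` is the operator `B̄_k`: `B̄_0 = id`, `B̄_k = (T_j − b_k·)∘B̄_{k-1}`. -/
def Bbar (a b c : QG) : ℕ → QG → QG
  | 0, φ => φ
  | k + 1, φ => Tj (Bbar a b c k φ) - bj a b c (k + 1) * Bbar a b c k φ

/-- `Rchain p` is the composition
`((1/H_0)·)∘(T_i − b·)∘((1/H_1)·)∘(T_i − T_j(b)·)∘···∘((1/H_{p-1})·)∘(T_i − T_j^{p-1}(b)·)`
(the identity for `p = 0`). -/
def Rchain (a b c : QG) : ℕ → QG → QG
  | 0, φ => φ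
  | k + 1, φ => Rchain a b c k ((1 / Hj a b c k) * (Ti φ - TjZ (k : ℤ) b * φ))

end

private lemma Lk_apply (a b c : QG) (k : ℕ) (φ : QG) (i j : ℤ) :
    Lk a b c k φ i j
      = φ (i+1) (j+1) - bj a b c k i j * φ (i+1) j - b i (j+(k:ℤ)) * φ i (j+1)
        + b i (j+(k:ℤ)) * bj a b c k (i-1) j * φ i j - Hj a b c k i j * φ i j := by
  cases k with
  | zero =>
      simp only [Lk, L, bj, Hj, bH, Ti, Tj, TiInv, Pi.sub_apply, Pi.mul_apply, Pi.add_apply,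
        Nat.cast_zero, add_zero]
      ring
  | succ k =>
      simp only [Lk, Ti, Tj, TiInv, TjZ, Pi.sub_apply, Pi.mul_apply, Nat.cast_succ]
      have : (i : ℤ) + 1 - 1 = i := by ring
      rw [this]
      ring

private lemma step (a b c : QG) (k : ℕ) (hH : NowhereZero (Hj a b c k)) (φ : QG) :
    Lk a b c (k+1) (Tj φ - TiInv (bj a b c k) * φ)
      = Tj (Lk a b c k φ) - bj a b c (k+1) * Lk a b c k φ := by
  funext i j
  have hb : bj a b c (k+1) i j
      = bj a b c k (i-1) j * Hj a b c k i (j+1) / Hj a b c k i j := by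
    simp [bj, Hj, bH, TiInv, Tj]
  have hHk : Hj a b c (k+1) i j
      = Hj a b c k i (j+1) - b i (j+(k:ℤ)) * bj a b c (k+1) i j
        + b i (j+((k:ℤ)+1)) * bj a b c (k+1) (i-1) j := by
    simp only [Hj, bj, bH, TjZ, TiInv, Tj, Pi.sub_apply, Pi.add_apply, Pi.mul_apply, Pi.div_apply]
  have h0 : Hj a b c k i j ≠ 0 := hH i j
  have e1 : Lk a b c (k+1) (Tj φ - TiInv (bj a b c k) * φ) i j
      = (Tj φ - TiInv (bj a b c k) * φ) (i+1) (j+1)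
        - bj a b c (k+1) i j * (Tj φ - TiInv (bj a b c k) * φ) (i+1) j
        - b i (j+((k:ℤ)+1)) * (Tj φ - TiInv (bj a b c k) * φ) i (j+1)
        + b i (j+((k:ℤ)+1)) * bj a b c (k+1) (i-1) j
            * (Tj φ - TiInv (bj a b c k) * φ) i j
        - Hj a b c (k+1) i j * (Tj φ - TiInv (bj a b c k) * φ) i j := by
    have := Lk_apply a b c (k+1) (Tj φ - TiInv (bj a b c k) * φ) i j
    simpa [Nat.cast_succ, add_assoc] using this
  simp only [Pi.sub_apply, Pi.mul_apply, Tj]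
  rw [Lk_apply a b c k φ i j, Lk_apply a b c k φ i (j+1), e1]
  simp only [Pi.sub_apply, Pi.mul_apply, Tj, TiInv]
  have hi1 : (i : ℤ) + 1 - 1 = i := by ring
  rw [hi1, hHk, hb]
  field_simp
  ring

/-- For every `k ≥ 0`, if `H_0, …, H_{k-1}` are nowhere zero then the
operator identity `L_k∘B_{k-1} = B̄_k∘L` holds on `𝔊`.
(Here `B_{k-1} = Bo k` and `B̄_k = Bbar k`.) -/
theorem statement10 (a b c : QG) (k : ℕ) (hH : ∀ m, m < k → NowhereZero (Hj a b c m)) :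
    ∀ φ : QG, Lk a b c k (Bo a b c k φ) = Bbar a b c k (L a b c φ) := by
  induction k with
  | zero => intro φ; rfl
  | succ k ih =>
      intro φ
      have ihφ := ih (fun m hm => hH m (hm.trans (Nat.lt_succ_self k))) φ
      calc Lk a b c (k+1) (Bo a b c (k+1) φ)
          = Lk a b c (k+1) (Tj (Bo a b c k φ) - TiInv (bj a b c k) * Bo a b c k φ) := rfl
        _ = Tj (Lk a b c k (Bo a b c k φ)) - bj a b c (k+1) * Lk a b c k (Bo a b c k φ) :=
            step a b c k (hH k (Nat.lt_succ_self k)) (Bo a b c k φ)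
        _ = Tj (Bbar a b c k (L a b c φ)) - bj a b c (k+1) * Bbar a b c k (L a b c φ) := by
            rw [ihφ]
        _ = Bbar a b c (k+1) (L a b c φ) := rfl

end QG
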